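/- arXiv:1901.06743 — 3 statements merged into one kernel-verified Lean document; each statement's English description precedes it below -/
import Mathlib

section
/- Let W and M be finite-dimensional real inner product spaces, s : W × W → ℝ a symmetric positive semi-definite bilinear form, and b : M × W → ℝ a bilinear form. Suppose (i) s(λ,λ) = 0 together with b(v, λ) = 0 for all v ∈ M implies λ = 0, and (ii) there exists β > 0 such that sup_{0≠w∈W} b(v,w)/s(w,w)^{1/2} ≥ β‖v‖ for all v ∈ M (with the convention that the supremum is over w with s(w,w) > 0). Then for any f* ∈ W', the saddle-point system: find (u, λ) ∈ M × W with s(λ, w) + b(u, w) = f*(w) for all w ∈ W and b(v, λ) = 0 for all v ∈ M, has at most one solution. -/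
/- Statement 6: uniqueness for the saddle-point system
   s(λ,w) + b(u,w) = f*(w) ∀w,  b(v,λ) = 0 ∀v,
   under (i) the kernel condition and (ii) the inf-sup condition
   sup_{w : s(w,w)>0} b(v,w)/s(w,w)^{1/2} ≥ β‖v‖ (encoded in bound form). -/
theorem saddle_point_uniqueness
    {W M : Type*}
    [NormedAddCommGroup W] [InnerProductSpace ℝ W] [FiniteDimensional ℝ W]
    [NormedAddCommGroup M] [InnerProductSpace ℝ M] [FiniteDimensional ℝ M]
    (s : W → W → ℝ) (b : M → W → ℝ)
    -- bilinearity and symmetry/positivity of s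
    (hs_add : ∀ x y z : W, s (x + y) z = s x z + s y z)
    (hs_smul : ∀ (c : ℝ) (x y : W), s (c • x) y = c * s x y)
    (hs_symm : ∀ x y : W, s x y = s y x)
    (hs_psd : ∀ x : W, 0 ≤ s x x)
    -- bilinearity of b
    (hb_addl : ∀ (v v' : M) (w : W), b (v + v') w = b v w + b v' w)
    (hb_smull : ∀ (c : ℝ) (v : M) (w : W), b (c • v) w = c * b v w)
    (hb_addr : ∀ (v : M) (w w' : W), b v (w + w') = b v w + b v w')
    (hb_smulr : ∀ (c : ℝ) (v : M) (w : W), b v (c • w) = c * b v w)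
    -- (i) kernel condition
    (hker : ∀ lam : W, s lam lam = 0 → (∀ v : M, b v lam = 0) → lam = 0)
    -- (ii) inf-sup condition
    (β : ℝ) (hβ : 0 < β)
    (hinfsup : ∀ (v : M) (c : ℝ),
      (∀ w : W, 0 < s w w → b v w ≤ c * Real.sqrt (s w w)) → β * ‖v‖ ≤ c)
    (f : W →ₗ[ℝ] ℝ) :
    ∀ (u₁ u₂ : M) (l₁ l₂ : W),
      (∀ w : W, s l₁ w + b u₁ w = f w) → (∀ v : M, b v l₁ = 0) →
      (∀ w : W, s l₂ w + b u₂ w = f w) → (∀ v : M, b v l₂ = 0) →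
      u₁ = u₂ ∧ l₁ = l₂ := by
  intro u₁ u₂ l₁ l₂ h1 h1b h2 h2b
  -- subtraction lemmas
  have hs_sub : ∀ x y z : W, s (x - y) z = s x z - s y z := by
    intro x y z
    have := hs_add (x - y) y z
    rw [sub_add_cancel] at this
    linarith
  have hb_subl : ∀ (v v' : M) (w : W), b (v - v') w = b v w - b v' w := by
    intro v v' w
    have := hb_addl (v - v') v' w
    rw [sub_add_cancel] at this
    linarith
  set l := l₁ - l₂ with hl
  set u := u₁ - u₂ with hu
  have hbl : ∀ v : M, b v l = 0 := by
    intro v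
    have := hb_addr v l₁ (-l₂)
    have hneg : b v (-l₂) = -b v l₂ := by
      have := hb_smulr (-1) v l₂; simpa using this
    have : b v (l₁ - l₂) = b v l₁ + b v (-l₂) := by
      simpa [sub_eq_add_neg] using hb_addr v l₁ (-l₂)
    rw [hl, this, hneg, h1b v, h2b v]; ring
  have heq : ∀ w : W, s l w + b u w = 0 := by
    intro w
    rw [hl, hu, hs_sub, hb_subl]
    have := h1 w; have := h2 w; linarith
  have hsll : s l l = 0 := by
    have := heq l
    rw [hbl u] at this
    linarith
  have hl0 : l = 0 := hker l hsll hbl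
  have hl12 : l₁ = l₂ := by rwa [hl, sub_eq_zero] at hl0
  have hbu : ∀ w : W, b u w = 0 := by
    intro w
    have := heq w
    rw [hl0] at this
    have hz : s (0 : W) w = 0 := by
      have := hs_smul 0 0 w; simpa using this
    linarith
  have hub : β * ‖u‖ ≤ 0 := by
    apply hinfsup u 0
    intro w hw
    rw [hbu w]; simp
  have hu0 : u = 0 := by
    have : ‖u‖ ≤ 0 := by
      by_contra h
      push_neg at h
      nlinarith
    have := norm_nonneg u
    have : ‖u‖ = 0 := le_antisymm ‹‖u‖ ≤ 0› this
    exact norm_eq_zero.mp this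
  exact ⟨by rwa [hu, sub_eq_zero] at hu0, hl12⟩
end

section
/- If the homogeneous PDWG system yields s(λ_h, λ_h) = 0, then on each element T the stabilizer structure forces λ₀ = λ_b on ∂T and a∇λ₀·n = λ_n on ∂T, and consequently in the bilinear form b(v, λ_h) all boundary remainder terms vanish, so that b(v, λ_h) = Σ_T (ℒλ₀ + b·∇λ₀, v)_T for all v ∈ M_h. -/
/- Statement 12: if s(λ_h, λ_h) = 0 then on each element T the jumps λ₀ − λ_b on ∂T
   and a∇λ₀·n − λ_n on ∂T vanish, and consequently the boundary remainder terms in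
   b(v, λ_h) vanish, so b(v, λ_h) = Σ_T (ℒλ₀ + b·∇λ₀, v)_T for all v ∈ M_h.
   Encoding: jump T ∈ E represents (λ₀ − λ_b)|_{∂T} (in the weighted L²(∂T) space),
   fluxjump T represents (a∇λ₀·n − λ_n)|_{∂T}; c1 T, c2 T > 0 are the stabilizer
   weights h_T^{-3}, h_T^{-1}; res T ≥ 0 is the residual term; vol T v is
   (ℒλ₀ + b·∇λ₀, v)_T and R T v the boundary remainder in the local identity. -/
theorem stabilizer_kernel_structure
    {ι Mh E : Type*} [NormedAddCommGroup E]
    (𝒯 : Finset ι)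
    (c1 c2 : ι → ℝ) (hc1 : ∀ T, 0 < c1 T) (hc2 : ∀ T, 0 < c2 T)
    (γ : ℝ) (hγ : 0 ≤ γ)
    (jump fluxjump : ι → E) (res : ι → ℝ) (hres : ∀ T, 0 ≤ res T)
    (svalue : ℝ)
    (hs : svalue = ∑ T ∈ 𝒯,
      (c1 T * ‖jump T‖ ^ 2 + c2 T * ‖fluxjump T‖ ^ 2 + γ * res T))
    (vol R : ι → Mh → ℝ) (bform : Mh → ℝ)
    -- the local identity for b(v, λ_h)
    (hb : ∀ v : Mh, bform v = ∑ T ∈ 𝒯, (vol T v + R T v))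
    -- the remainder consists of pairings against the two jumps
    (hR : ∀ T ∈ 𝒯, ∀ v : Mh, jump T = 0 → fluxjump T = 0 → R T v = 0)
    (h0 : svalue = 0) :
    (∀ T ∈ 𝒯, jump T = 0 ∧ fluxjump T = 0) ∧
    (∀ v : Mh, bform v = ∑ T ∈ 𝒯, vol T v) := by
  have hnn : ∀ T ∈ 𝒯, 0 ≤ c1 T * ‖jump T‖ ^ 2 + c2 T * ‖fluxjump T‖ ^ 2 + γ * res T := by
    intro T _
    exact add_nonneg (add_nonneg (mul_nonneg (hc1 T).le (sq_nonneg _))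
      (mul_nonneg (hc2 T).le (sq_nonneg _))) (mul_nonneg hγ (hres T))
  have hzero : ∀ T ∈ 𝒯, c1 T * ‖jump T‖ ^ 2 + c2 T * ‖fluxjump T‖ ^ 2 + γ * res T = 0 :=
    (Finset.sum_eq_zero_iff_of_nonneg hnn).mp (by rw [← hs, h0])
  have hjumps : ∀ T ∈ 𝒯, jump T = 0 ∧ fluxjump T = 0 := by
    intro T hT
    have h := hzero T hT
    have h1 : 0 ≤ c1 T * ‖jump T‖ ^ 2 := mul_nonneg (hc1 T).le (sq_nonneg _)
    have h2 : 0 ≤ c2 T * ‖fluxjump T‖ ^ 2 := mul_nonneg (hc2 T).le (sq_nonneg _)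
    have h3 : 0 ≤ γ * res T := mul_nonneg hγ (hres T)
    have e1 : c1 T * ‖jump T‖ ^ 2 = 0 := by linarith
    have e2 : c2 T * ‖fluxjump T‖ ^ 2 = 0 := by linarith
    constructor
    · have : ‖jump T‖ ^ 2 = 0 := by
        rcases mul_eq_zero.mp e1 with h | h
        · exact absurd h (hc1 T).ne'
        · exact h
      simpa using this
    · have : ‖fluxjump T‖ ^ 2 = 0 := by
        rcases mul_eq_zero.mp e2 with h | h
        · exact absurd h (hc2 T).ne'
        · exact h
      simpa using this
  refine ⟨hjumps, fun v => ?_⟩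
  rw [hb v]
  apply Finset.sum_congr rfl
  intro T hT
  have := hjumps T hT
  rw [hR T hT v this.1 this.2, add_zero]
end

section
/- Let W, M be finite-dimensional spaces, s a symmetric positive semi-definite bilinear form on W, b : M × W → ℝ bilinear, and suppose ε_h ∈ W, e_h ∈ M satisfy s(ε_h, w) + b(e_h, w) = ℓ(w) for all w ∈ W and b(v, ε_h) = 0 for all v ∈ M, where ℓ is a linear functional with |ℓ(w)| ≤ E·⦀w⦀ for all w (⦀w⦀ = s(w,w)^{1/2}). Then ⦀ε_h⦀ ≤ E, and moreover |b(e_h, w)| ≤ 2E⦀w⦀ for all w ∈ W; if additionally the inf-sup condition sup_{w} b(v,w)/⦀w⦀ ≥ β‖v‖ holds on M, then ‖e_h‖ ≤ 2E/β. -/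
/- Statement 16: abstract error estimate.  If s(ε_h, w) + b(e_h, w) = ℓ(w) ∀w,
   b(v, ε_h) = 0 ∀v, and |ℓ(w)| ≤ E ⦀w⦀ with ⦀w⦀ = s(w,w)^{1/2}, then
   ⦀ε_h⦀ ≤ E and |b(e_h, w)| ≤ 2E⦀w⦀ for all w; with the inf-sup condition
   sup_w b(v,w)/⦀w⦀ ≥ β‖v‖ (encoded in bound form), also ‖e_h‖ ≤ 2E/β. -/
theorem abstract_error_estimate
    {W M : Type*} [AddCommGroup W] [Module ℝ W]
    (s : W → W → ℝ) (b : M → W → ℝ) (nrm : M → ℝ)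
    (hs_add : ∀ x y z : W, s (x + y) z = s x z + s y z)
    (hs_smul : ∀ (c : ℝ) (x y : W), s (c • x) y = c * s x y)
    (hs_symm : ∀ x y : W, s x y = s y x)
    (hs_psd : ∀ x : W, 0 ≤ s x x)
    -- Cauchy-Schwarz for the semi-definite form
    (hCS : ∀ x y : W, |s x y| ≤ Real.sqrt (s x x) * Real.sqrt (s y y))
    (εh : W) (eh : M) (ℓ : W → ℝ) (E : ℝ) (hE : 0 ≤ E)
    (heq1 : ∀ w : W, s εh w + b eh w = ℓ w)
    (heq2 : ∀ v : M, b v εh = 0)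
    (hℓ : ∀ w : W, |ℓ w| ≤ E * Real.sqrt (s w w))
    (β : ℝ) (hβ : 0 < β)
    (hinfsup : ∀ (v : M) (c : ℝ), 0 ≤ c →
      (∀ w : W, b v w ≤ c * Real.sqrt (s w w)) → β * nrm v ≤ c) :
    Real.sqrt (s εh εh) ≤ E ∧
    (∀ w : W, |b eh w| ≤ 2 * E * Real.sqrt (s w w)) ∧
    nrm eh ≤ 2 * E / β := by

  have key : s εh εh = ℓ εh := by
    have h1 := heq1 εh
    have h2 := heq2 eh
    linarith
  have ht : Real.sqrt (s εh εh) ≤ E := by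
    set t := Real.sqrt (s εh εh) with htdef
    have ht0 : 0 ≤ t := Real.sqrt_nonneg _
    have hsq : t * t = s εh εh := Real.mul_self_sqrt (hs_psd εh)
    have hle : t * t ≤ E * t := by
      rw [hsq, key]
      calc ℓ εh ≤ |ℓ εh| := le_abs_self _
        _ ≤ E * Real.sqrt (s εh εh) := hℓ εh
    rcases eq_or_lt_of_le ht0 with h | h
    · rw [← h]; exact hE
    · exact le_of_mul_le_mul_right (by linarith) h
  have hb : ∀ w : W, |b eh w| ≤ 2 * E * Real.sqrt (s w w) := by
    intro w
    have h1 := heq1 w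
    have hbe : b eh w = ℓ w - s εh w := by linarith
    rw [hbe]
    calc |ℓ w - s εh w| ≤ |ℓ w| + |s εh w| := abs_sub _ _
      _ ≤ E * Real.sqrt (s w w) + Real.sqrt (s εh εh) * Real.sqrt (s w w) := by
          gcongr
          exacts [hℓ w, hCS εh w]
      _ ≤ E * Real.sqrt (s w w) + E * Real.sqrt (s w w) := by
          gcongr
      _ = 2 * E * Real.sqrt (s w w) := by ring
  refine ⟨ht, hb, ?_⟩
  have h := hinfsup eh (2 * E) (by linarith) (fun w => (le_abs_self _).trans (hb w))
  rw [le_div_iff₀ hβ]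
  linarith [h]
end
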